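/- Let M be a universal n-linear order, let m ∈ {1, …, n}, and let g ∈ Aut(M) be such that for every x ∈ M there exists y with x <_m y and y <_m g y, and there exists z with z <_m x and g z <_m z. Then there exists h ∈ Aut(M) such that the automorphism f = g ∘ h⁻¹ ∘ g ∘ h has, with respect to <_m, a +-orbital unbounded above and a −-orbital unbounded below; that is, there exist a, b ∈ M with a <_m f a and {f^k a : k ∈ ℤ} unbounded above in <_m, and with f b <_m b and {f^k b : k ∈ ℤ} unbounded below in <_m. -/

import Mathlib

/-- A set `M` equipped with `n` linear orders `<_1, …, <_n`. -/
structure NLinear (n : ℕ) (M : Type*) where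
  lt : Fin n → M → M → Prop
  irrefl : ∀ i a, ¬ lt i a a
  trans : ∀ i a b c, lt i a b → lt i b c → lt i a c
  total : ∀ i a b, lt i a b ∨ a = b ∨ lt i b a

/-- `M` with its `n` linear orders is a universal `n`-linear order: it is countably
infinite and has the one-point extension property. -/
structure IsUniversalNLinear (n : ℕ) (M : Type*) (L : NLinear n M) : Prop where
  countable : Countable M
  infinite : Infinite M
  extension : ∀ (A : Finset M) (D : Fin n → Set M),
    (∀ i, D i ⊆ ↑A) →
    (∀ i, ∀ a ∈ A, ∀ b ∈ A, L.lt i a b → b ∈ D i → a ∈ D i) →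
    ∃ x, x ∉ A ∧ ∀ i, ∀ a ∈ A, (L.lt i a x ↔ a ∈ D i)

/-- The automorphism group of an `n`-linearly ordered set, as a subgroup of `Equiv.Perm M`. -/
def NLinear.aut {n : ℕ} {M : Type*} (L : NLinear n M) : Subgroup (Equiv.Perm M) where
  carrier := {g | ∀ i a b, L.lt i a b ↔ L.lt i (g a) (g b)}
  one_mem' := fun _ _ _ => Iff.rfl
  mul_mem' := by
    intro g h hg hh i a b
    exact (hh i a b).trans (hg i (h a) (h b))
  inv_mem' := by
    intro g hg i a b
    simpa using (hg i (g⁻¹ a) (g⁻¹ b)).symm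

/-- `f` has a single `+`-orbital with respect to `<_m`. -/
def NLinear.SinglePlus {n : ℕ} {M : Type*} (L : NLinear n M) (m : Fin n)
    (f : Equiv.Perm M) : Prop :=
  ∃ a : M, L.lt m a (f a) ∧ (∀ x : M, ∃ k : ℤ, L.lt m x ((f ^ k) a)) ∧
    (∀ x : M, ∃ k : ℤ, L.lt m ((f ^ k) a) x)

/-- `f` has a single `−`-orbital with respect to `<_m`. -/
def NLinear.SingleMinus {n : ℕ} {M : Type*} (L : NLinear n M) (m : Fin n)
    (f : Equiv.Perm M) : Prop :=
  ∃ a : M, L.lt m (f a) a ∧ (∀ x : M, ∃ k : ℤ, L.lt m x ((f ^ k) a)) ∧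
    (∀ x : M, ∃ k : ℤ, L.lt m ((f ^ k) a) x)

/-- `f` has a `+`-orbital unbounded above with respect to `<_m`. -/
def NLinear.PlusUnbAbove {n : ℕ} {M : Type*} (L : NLinear n M) (m : Fin n)
    (f : Equiv.Perm M) : Prop :=
  ∃ a : M, L.lt m a (f a) ∧ ∀ x : M, ∃ k : ℤ, L.lt m x ((f ^ k) a)

/-- `f` has a `−`-orbital unbounded below with respect to `<_m`. -/
def NLinear.MinusUnbBelow {n : ℕ} {M : Type*} (L : NLinear n M) (m : Fin n)
    (f : Equiv.Perm M) : Prop :=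
  ∃ b : M, L.lt m (f b) b ∧ ∀ x : M, ∃ k : ℤ, L.lt m ((f ^ k) b) x

/-!
The automorphism `h` is the union of a chain of finite partial isomorphisms built by
back-and-forth. For `f = g h⁻¹ g h`, the equations `h a = β` and `h c = g β` force `f a = g c`.
If `a` lies `<_m`-above the current domain, the extension property and the hypothesis on `g` let
us choose `β` above the current range with `β <_m g β`, and then `c` above the domain and above
any prescribed point with `c <_m g c`. So `a <_m c <_m f a`, and iterating, with every point of
`M` eventually prescribed, gives a `+`-orbital unbounded above. The `−`-orbital is the same step
for the reversed orders. The back-and-forth steps in between must keep the domain between the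
current points of the two orbitals, which is why the backward step places its new point in a
prescribed `<_m`-interval.
-/

namespace NLinear

variable {n : ℕ} {M : Type*} (L : NLinear n M)

theorem lt_asymm {i : Fin n} {a b : M} (hab : L.lt i a b) (hba : L.lt i b a) : False :=
  L.irrefl i a (L.trans i a b a hab hba)

theorem ne_of_lt {i : Fin n} {a b : M} (h : L.lt i a b) : a ≠ b := by
  rintro rfl
  exact L.irrefl i a h

theorem lt_of_not_lt_of_ne {i : Fin n} {a b : M} (h : ¬ L.lt i a b) (hne : a ≠ b) :
    L.lt i b a :=
  ((L.total i a b).resolve_left h).resolve_left hne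

theorem lt_iff_not_lt_of_ne {i : Fin n} {a b : M} (hne : a ≠ b) :
    L.lt i a b ↔ ¬ L.lt i b a :=
  ⟨fun hab hba => L.lt_asymm hab hba, fun h => L.lt_of_not_lt_of_ne h hne.symm⟩

def reverse : NLinear n M where
  lt i a b := L.lt i b a
  irrefl := L.irrefl
  trans i a b c hab hbc := L.trans i c b a hbc hab
  total i a b := by
    rcases L.total i a b with h | h | h
    exacts [Or.inr (Or.inr h), Or.inr (Or.inl h), Or.inl h]

theorem mem_aut_reverse {g : Equiv.Perm M} : g ∈ L.reverse.aut ↔ g ∈ L.aut :=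
  ⟨fun hg i a b => hg i b a, fun hg i a b => hg i b a⟩

def IsLowerIn (i : Fin n) (A : Finset M) (D : Set M) : Prop :=
  ∀ a ∈ A, ∀ b ∈ A, L.lt i a b → b ∈ D → a ∈ D

/-- A finite partial isomorphism, given by its graph; preserving any one of the orders makes it
functional and injective. -/
def IsPartialIso (P : Finset (M × M)) : Prop :=
  ∀ q ∈ P, ∀ r ∈ P, ∀ i, L.lt i q.1 r.1 ↔ L.lt i q.2 r.2

def mirrorCut (P : Finset (M × M)) (x : M) (i : Fin n) : Set M :=
  {t | ∃ q ∈ P, q.2 = t ∧ L.lt i q.1 x}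

/-- `f (a) = a'` for `f = g h⁻¹ g h` and every `h` extending `P`. -/
def ForcesStep (g : Equiv.Perm M) (P : Finset (M × M)) (a a' : M) : Prop :=
  ∃ β c, (a, β) ∈ P ∧ (c, g β) ∈ P ∧ g c = a'

variable {L}

theorem isPartialIso_reverse {P : Finset (M × M)} :
    L.reverse.IsPartialIso P ↔ L.IsPartialIso P :=
  ⟨fun hP q hq r hr i => hP r hr q hq i, fun hP q hq r hr i => hP r hr q hq i⟩

theorem IsPartialIso.snd_eq_of_fst_eq {P : Finset (M × M)} (hP : L.IsPartialIso P) (m : Fin n)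
    {q r : M × M} (hq : q ∈ P) (hr : r ∈ P) (h : q.1 = r.1) : q.2 = r.2 := by
  by_contra hne
  rcases L.total m q.2 r.2 with hlt | heq | hlt
  · exact L.ne_of_lt ((hP q hq r hr m).2 hlt) h
  · exact hne heq
  · exact L.ne_of_lt ((hP r hr q hq m).2 hlt) h.symm

theorem IsPartialIso.fst_eq_of_snd_eq {P : Finset (M × M)} (hP : L.IsPartialIso P) (m : Fin n)
    {q r : M × M} (hq : q ∈ P) (hr : r ∈ P) (h : q.2 = r.2) : q.1 = r.1 := by
  by_contra hne
  rcases L.total m q.1 r.1 with hlt | heq | hlt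
  · exact L.ne_of_lt ((hP q hq r hr m).1 hlt) h
  · exact hne heq
  · exact L.ne_of_lt ((hP r hr q hq m).1 hlt) h.symm

theorem ForcesStep.mono {g : Equiv.Perm M} {P Q : Finset (M × M)} {a a' : M}
    (h : ForcesStep g P a a') (hPQ : P ⊆ Q) : ForcesStep g Q a a' :=
  let ⟨β, c, hβ, hc, hgc⟩ := h
  ⟨β, c, hPQ hβ, hPQ hc, hgc⟩

theorem ForcesStep.apply_eq {g h : Equiv.Perm M} {P : Finset (M × M)} {a a' : M}
    (hstep : ForcesStep g P a a') (hh : ∀ q ∈ P, h q.1 = q.2) : (g * h⁻¹ * g * h) a = a' := by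
  obtain ⟨β, c, hβ, hc, rfl⟩ := hstep
  have hc' : h⁻¹ (g β) = c := by rw [Equiv.Perm.inv_eq_iff_eq, hh _ hc]
  simp only [Equiv.Perm.mul_apply, hh _ hβ, hc']

theorem exists_mem_aut_of_chain (m : Fin n) (P : ℕ → Finset (M × M)) (hmono : Monotone P)
    (hP : ∀ k, L.IsPartialIso (P k)) (hdom : ∀ x, ∃ k y, (x, y) ∈ P k)
    (hran : ∀ y, ∃ k x, (x, y) ∈ P k) : ∃ h ∈ L.aut, ∀ k, ∀ q ∈ P k, h q.1 = q.2 := by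
  have common : ∀ {k l q r}, q ∈ P k → r ∈ P l → q ∈ P (max k l) ∧ r ∈ P (max k l) :=
    fun hq hr => ⟨hmono (le_max_left _ _) hq, hmono (le_max_right _ _) hr⟩
  choose kx y hy using hdom
  have hy_eq : ∀ k, ∀ q ∈ P k, y q.1 = q.2 := fun k q hq =>
    have h := common (hy q.1) hq
    (hP _).snd_eq_of_fst_eq m h.1 h.2 rfl
  have hbij : Function.Bijective y := by
    refine ⟨fun x x' hxx' => ?_, fun z => ?_⟩
    · have h := common (hy x) (hy x')
      exact (hP _).fst_eq_of_snd_eq m h.1 h.2 hxx'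
    · obtain ⟨k, x, hx⟩ := hran z
      exact ⟨x, hy_eq k _ hx⟩
  refine ⟨Equiv.ofBijective y hbij, fun i x x' => ?_, hy_eq⟩
  have h := common (hy x) (hy x')
  exact (hP _) _ h.1 _ h.2 i

theorem plusUnbAbove_of_orbit {m : Fin n} {f : Equiv.Perm M} {a : ℕ → M}
    (hf : ∀ k, f (a k) = a (k + 1)) (h01 : L.lt m (a 0) (a 1))
    (hcof : ∀ x, ∃ k, L.lt m x (a k)) : L.PlusUnbAbove m f := by
  have hpow : ∀ k : ℕ, (f ^ k) (a 0) = a k := by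
    intro k
    induction k with
    | zero => rfl
    | succ k ih => rw [pow_succ', Equiv.Perm.mul_apply, ih, hf]
  refine ⟨a 0, by rwa [hf], fun x => ?_⟩
  obtain ⟨k, hk⟩ := hcof x
  exact ⟨k, by rwa [zpow_natCast, hpow]⟩

section DecidableEq

variable [DecidableEq M]

theorem IsPartialIso.image_swap {P : Finset (M × M)} (hP : L.IsPartialIso P) :
    L.IsPartialIso (P.image Prod.swap) := by
  simp only [IsPartialIso, Finset.forall_mem_image]
  exact fun q hq r hr i => (hP q hq r hr i).symm

theorem isPartialIso_image_swap {P : Finset (M × M)} :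
    L.IsPartialIso (P.image Prod.swap) ↔ L.IsPartialIso P :=
  ⟨fun hP => by simpa [Finset.image_image] using hP.image_swap, IsPartialIso.image_swap⟩

theorem IsPartialIso.insert_of_lt_iff {P : Finset (M × M)} (hP : L.IsPartialIso P) {x y : M}
    (hx : ∀ q ∈ P, q.1 ≠ x) (hy : ∀ q ∈ P, q.2 ≠ y)
    (hxy : ∀ q ∈ P, ∀ i, L.lt i q.1 x ↔ L.lt i q.2 y) :
    L.IsPartialIso (insert (x, y) P) := by
  simp only [IsPartialIso, Finset.forall_mem_insert]
  refine ⟨⟨fun i => iff_of_false (L.irrefl i x) (L.irrefl i y), fun r hr i => ?_⟩,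
    fun q hq => ⟨hxy q hq, hP q hq⟩⟩
  rw [L.lt_iff_not_lt_of_ne (hx r hr).symm, L.lt_iff_not_lt_of_ne (hy r hr).symm, hxy r hr i]

theorem IsPartialIso.isLowerIn_mirrorCut {P : Finset (M × M)} (hP : L.IsPartialIso P)
    (x : M) (i : Fin n) : L.IsLowerIn i (P.image Prod.snd) (L.mirrorCut P x i) := by
  rintro _ hs _ - hst ⟨q, hq, rfl, hqx⟩
  obtain ⟨r, hr, rfl⟩ := Finset.mem_image.1 hs
  exact ⟨r, hr, rfl, L.trans i _ _ _ ((hP r hr q hq i).2 hst) hqx⟩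

theorem IsPartialIso.insert_of_realize {P : Finset (M × M)} (hP : L.IsPartialIso P) (m : Fin n)
    {x y : M} (hx : ∀ q ∈ P, q.1 ≠ x) (hy : y ∉ P.image Prod.snd)
    (hxy : ∀ i, ∀ t ∈ P.image Prod.snd, L.lt i t y ↔ t ∈ L.mirrorCut P x i) :
    L.IsPartialIso (insert (x, y) P) := by
  refine hP.insert_of_lt_iff hx (fun q hq h => hy (h ▸ Finset.mem_image_of_mem Prod.snd hq))
    fun q hq i => ?_
  rw [hxy i q.2 (Finset.mem_image_of_mem _ hq)]
  refine ⟨fun h => ⟨q, hq, rfl, h⟩, ?_⟩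
  rintro ⟨r, hr, hrq, hrx⟩
  rwa [hP.fst_eq_of_snd_eq m hr hq hrq] at hrx

end DecidableEq

end NLinear

namespace IsUniversalNLinear


variable {n : ℕ} {M : Type*} {L : NLinear n M}

theorem exists_realize (hL : IsUniversalNLinear n M L) (A : Finset M) (D : Fin n → Set M)
    (hD : ∀ i, L.IsLowerIn i A (D i)) : ∃ x ∉ A, ∀ i, ∀ a ∈ A, L.lt i a x ↔ a ∈ D i := by
  obtain ⟨x, hx, hxD⟩ := hL.extension A (fun i => D i ∩ A) (fun _ => Set.inter_subset_right)
    fun i a ha b hb hab hbD => ⟨hD i a ha b hb hab hbD.1, ha⟩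
  exact ⟨x, hx, fun i a ha => (hxD i a ha).trans (and_iff_left ha)⟩

theorem reverse (hL : IsUniversalNLinear n M L) : IsUniversalNLinear n M L.reverse := by
  refine ⟨hL.countable, hL.infinite, fun A D _ hD => ?_⟩
  obtain ⟨x, hx, hxD⟩ := hL.exists_realize A (fun i => (D i)ᶜ)
    fun i a ha b hb hab hbD haD => hbD (hD i b hb a ha hab haD)
  refine ⟨x, hx, fun i a ha => ?_⟩
  rw [← not_not (a := a ∈ D i), ← Set.mem_compl_iff, ← hxD i a ha]
  exact L.lt_iff_not_lt_of_ne fun h => hx (h ▸ ha)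

theorem exists_realize_of_subset (hL : IsUniversalNLinear n M L) (m : Fin n) {A B : Finset M}
    (hAB : A ⊆ B) (D : Fin n → Set M) (hD : ∀ i, L.IsLowerIn i A (D i)) (E : Set M)
    (hE : L.IsLowerIn m B E) (hEA : ∀ a ∈ A, a ∈ E ↔ a ∈ D m) :
    ∃ x ∉ B, (∀ i, ∀ a ∈ A, L.lt i a x ↔ a ∈ D i) ∧ ∀ b ∈ B, L.lt m b x ↔ b ∈ E := by
  classical
  let D' : Fin n → Set M := Function.update
    (fun i => {b | ∃ d ∈ A, d ∈ D i ∧ (b = d ∨ L.lt i b d)}) m E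
  have hD' : ∀ i, L.IsLowerIn i B (D' i) := by
    intro i
    by_cases hi : i = m
    · subst hi
      simpa only [D', Function.update_self] using hE
    · simp only [D', Function.update_of_ne hi]
      rintro c - b - hcb ⟨d, hd, hdD, rfl | hbd⟩
      exacts [⟨b, hd, hdD, Or.inr hcb⟩, ⟨d, hd, hdD, Or.inr (L.trans i c b d hcb hbd)⟩]
  obtain ⟨x, hx, hxD⟩ := hL.exists_realize B D' hD'
  refine ⟨x, hx, fun i a ha => ?_, by simpa only [D', Function.update_self] using hxD m⟩
  rw [hxD i a (hAB ha)]
  by_cases hi : i = m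
  · subst hi
    simpa only [D', Function.update_self] using hEA a ha
  · simp only [D', Function.update_of_ne hi]
    refine ⟨?_, fun haD => ⟨a, ha, haD, Or.inl rfl⟩⟩
    rintro ⟨d, hd, hdD, rfl | had⟩
    exacts [hdD, hD i a ha d hd had hdD]

theorem exists_realize_lt_apply (hL : IsUniversalNLinear n M L) {m : Fin n} {g : Equiv.Perm M}
    (hg : g ∈ L.aut) (hgp : ∀ x, ∃ y, L.lt m x y ∧ L.lt m y (g y)) (A B : Finset M)
    (D : Fin n → Set M) (hD : ∀ i, L.IsLowerIn i A (D i)) (hDm : ∀ a ∈ A, a ∈ D m) :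
    ∃ x, (∀ i, ∀ a ∈ A, L.lt i a x ↔ a ∈ D i) ∧ (∀ b ∈ B, L.lt m b x) ∧ L.lt m x (g x) := by
  classical
  obtain ⟨u, -, hu⟩ := hL.exists_realize (A ∪ B) (fun _ => ↑(A ∪ B))
    fun _ a ha _ _ _ _ => ha
  obtain ⟨y, huy, hy⟩ := hgp u
  have hlt_gy : ∀ c ∈ A ∪ B, L.lt m c (g y) := fun c hc =>
    L.trans m _ _ _ ((hu m c hc).2 hc) (L.trans m _ _ _ huy hy)
  -- a point `x` between `y` and `g y` satisfies `x <_m g y <_m g x`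
  let C := insert y (insert (g y) (A ∪ B))
  have hC : ∀ c ∈ C, c ≠ g y → L.lt m c (g y) := by
    intro c hc hne
    rcases Finset.mem_insert.1 hc with rfl | hc
    · exact hy
    rcases Finset.mem_insert.1 hc with rfl | hc
    · exact absurd rfl hne
    · exact hlt_gy c hc
  have hBC : A ∪ B ⊆ C := (Finset.subset_insert _ _).trans (Finset.subset_insert _ _)
  have hgy : g y ∈ C := Finset.mem_insert_of_mem (Finset.mem_insert_self _ _)
  obtain ⟨x, hxC, hxD, hxE⟩ :=
    hL.exists_realize_of_subset m (Finset.subset_union_left.trans hBC) D hD {c | c ≠ g y}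
      (fun c _ b hb hcb hb' hc' => L.lt_asymm (hC b hb hb') (hc' ▸ hcb))
      fun a ha => iff_of_true (L.ne_of_lt (hlt_gy a (Finset.mem_union_left B ha))) (hDm a ha)
  have hyx : L.lt m y x := (hxE y (Finset.mem_insert_self _ _)).2 (L.ne_of_lt hy)
  have hxgy : L.lt m x (g y) :=
    L.lt_of_not_lt_of_ne (fun h => (hxE _ hgy).1 h rfl) fun h => hxC (h ▸ hgy)
  refine ⟨x, hxD, fun b hb => ?_, L.trans m _ _ _ hxgy ((hg m y x).1 hyx)⟩
  have hb' : b ∈ A ∪ B := Finset.mem_union_right A hb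
  exact (hxE b (hBC hb')).2 (L.ne_of_lt (hlt_gy b hb'))

end IsUniversalNLinear

namespace NLinear

variable {n : ℕ} {M : Type*} {L : NLinear n M} [DecidableEq M]

theorem IsPartialIso.exists_insert (hL : IsUniversalNLinear n M L) (m : Fin n)
    {P : Finset (M × M)} (hP : L.IsPartialIso P) (x : M) :
    ∃ y, L.IsPartialIso (insert (x, y) P) := by
  by_cases hx : ∃ q ∈ P, q.1 = x
  · obtain ⟨q, hq, rfl⟩ := hx
    exact ⟨q.2, by rwa [Finset.insert_eq_of_mem hq]⟩
  push Not at hx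
  obtain ⟨y, hy, hxy⟩ := hL.exists_realize _ _ (hP.isLowerIn_mirrorCut x)
  exact ⟨y, hP.insert_of_realize m hx hy hxy⟩

theorem IsPartialIso.isLowerIn_insert_mirrorCut {m : Fin n} {P : Finset (M × M)}
    (hP : L.IsPartialIso P) (x : M) {lo hi : M} (hlohi : L.lt m lo hi)
    (hran : ∀ q ∈ P, L.lt m lo q.2 ∧ L.lt m q.2 hi) :
    L.IsLowerIn m (insert lo (insert hi (P.image Prod.snd))) (insert lo (L.mirrorCut P x m)) := by
  intro c hc b hb hcb hbE
  rcases Finset.mem_insert.1 hc with rfl | hc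
  · exact Set.mem_insert c _
  rcases hbE with hb | ⟨q, hq, rfl, hqx⟩
  · rw [Set.mem_singleton_iff.1 hb] at hcb
    rcases Finset.mem_insert.1 hc with hc | hc
    · exact (L.lt_asymm hcb (hc ▸ hlohi)).elim
    · obtain ⟨r, hr, rfl⟩ := Finset.mem_image.1 hc
      exact (L.lt_asymm hcb (hran r hr).1).elim
  · rcases Finset.mem_insert.1 hc with hc | hc
    · exact (L.lt_asymm hcb (hc ▸ (hran q hq).2)).elim
    · exact Or.inr (hP.isLowerIn_mirrorCut x m c hc q.2 (Finset.mem_image_of_mem _ hq) hcb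
        ⟨q, hq, rfl, hqx⟩)

theorem IsPartialIso.exists_insert_between (hL : IsUniversalNLinear n M L) (m : Fin n)
    {P : Finset (M × M)} (hP : L.IsPartialIso P) (x : M) {lo hi : M} (hlohi : L.lt m lo hi)
    (hran : ∀ q ∈ P, L.lt m lo q.2 ∧ L.lt m q.2 hi) :
    ∃ y, L.IsPartialIso (insert (x, y) P) ∧ L.lt m lo y ∧ L.lt m y hi := by
  by_cases hx : ∃ q ∈ P, q.1 = x
  · obtain ⟨q, hq, rfl⟩ := hx
    exact ⟨q.2, by rwa [Finset.insert_eq_of_mem hq], hran q hq⟩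
  push Not at hx
  have hlo : ∀ t ∈ P.image Prod.snd, L.lt m lo t := by
    simpa only [Finset.forall_mem_image] using fun q hq => (hran q hq).1
  obtain ⟨y, hyB, hxy, hyE⟩ := hL.exists_realize_of_subset m
    ((Finset.subset_insert _ _).trans (Finset.subset_insert _ _)) _
    (hP.isLowerIn_mirrorCut x) _ (hP.isLowerIn_insert_mirrorCut x hlohi hran)
    fun t ht => or_iff_right (L.ne_of_lt (hlo t ht)).symm
  refine ⟨y, hP.insert_of_realize m hx (fun hy => hyB ?_) hxy,
    (hyE lo (Finset.mem_insert_self _ _)).2 (Set.mem_insert _ _), ?_⟩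
  · exact Finset.mem_insert_of_mem (Finset.mem_insert_of_mem hy)
  have hhiB : hi ∈ insert lo (insert hi (P.image Prod.snd)) :=
    Finset.mem_insert_of_mem (Finset.mem_insert_self _ _)
  refine L.lt_of_not_lt_of_ne (fun h => ?_) fun h => hyB (h ▸ hhiB)
  rcases (hyE hi hhiB).1 h with h | ⟨q, hq, hqhi, -⟩
  · exact L.ne_of_lt hlohi h.symm
  · exact L.ne_of_lt (hran q hq).2 hqhi

theorem IsPartialIso.exists_insert_lt_apply (hL : IsUniversalNLinear n M L) {m : Fin n}
    {g : Equiv.Perm M} (hg : g ∈ L.aut) (hgp : ∀ x, ∃ y, L.lt m x y ∧ L.lt m y (g y))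
    {P : Finset (M × M)} (hP : L.IsPartialIso P) {x : M} (hx : ∀ q ∈ P, L.lt m q.1 x)
    (B : Finset M) :
    ∃ y, L.IsPartialIso (insert (x, y) P) ∧ (∀ b ∈ B, L.lt m b y) ∧ L.lt m y (g y) := by
  have hDm : ∀ t ∈ P.image Prod.snd, t ∈ L.mirrorCut P x m := by
    simpa only [Finset.forall_mem_image] using fun q hq => ⟨q, hq, rfl, hx q hq⟩
  obtain ⟨y, hxy, hB, hy⟩ := hL.exists_realize_lt_apply hg hgp _ B _
    (hP.isLowerIn_mirrorCut x) hDm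
  refine ⟨y, hP.insert_of_realize m (fun q hq => L.ne_of_lt (hx q hq)) (fun ht => ?_) hxy, hB, hy⟩
  exact L.irrefl m y ((hxy m y ht).2 (hDm y ht))

theorem IsPartialIso.exists_superset_mem (hL : IsUniversalNLinear n M L) (m : Fin n)
    {P : Finset (M × M)} (hP : L.IsPartialIso P) {lo hi x : M}
    (hdom : ∀ q ∈ P, L.lt m lo q.1 ∧ L.lt m q.1 hi) (hlo : L.lt m lo x) (hhi : L.lt m x hi) :
    ∃ P', P ⊆ P' ∧ L.IsPartialIso P' ∧ (∀ q ∈ P', L.lt m lo q.1 ∧ L.lt m q.1 hi) ∧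
      (∃ y, (x, y) ∈ P') ∧ ∃ w, (w, x) ∈ P' := by
  obtain ⟨y, hP₁⟩ := hP.exists_insert hL m x
  have hdom₁ : ∀ q ∈ insert (x, y) P, L.lt m lo q.1 ∧ L.lt m q.1 hi :=
    (Finset.forall_mem_insert _ _ _).2 ⟨⟨hlo, hhi⟩, hdom⟩
  obtain ⟨w, hP₂, hw⟩ := hP₁.image_swap.exists_insert_between hL m x (L.trans m _ _ _ hlo hhi)
    (by simpa only [Finset.forall_mem_image, Prod.snd_swap] using hdom₁)
  rw [← Prod.swap_prod_mk, ← Finset.image_insert, isPartialIso_image_swap] at hP₂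
  exact ⟨_, (Finset.subset_insert _ _).trans (Finset.subset_insert _ _), hP₂,
    (Finset.forall_mem_insert _ _ _).2 ⟨hw, hdom₁⟩,
    ⟨y, Finset.mem_insert_of_mem (Finset.mem_insert_self _ _)⟩, ⟨w, Finset.mem_insert_self _ _⟩⟩

theorem IsPartialIso.exists_forcesStep (hL : IsUniversalNLinear n M L) {m : Fin n}
    {g : Equiv.Perm M} (hg : g ∈ L.aut) (hgp : ∀ x, ∃ y, L.lt m x y ∧ L.lt m y (g y))
    {P : Finset (M × M)} (hP : L.IsPartialIso P) {lo a : M} (hlo : L.lt m lo a)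
    (hdom : ∀ q ∈ P, L.lt m lo q.1 ∧ L.lt m q.1 a) (x : M) :
    ∃ P' a', P ⊆ P' ∧ L.IsPartialIso P' ∧ ForcesStep g P' a a' ∧
      (∀ q ∈ P', L.lt m lo q.1 ∧ L.lt m q.1 a') ∧ L.lt m a a' ∧ L.lt m x a' := by
  obtain ⟨β, hP₁, -, hβ⟩ := hP.exists_insert_lt_apply hL hg hgp (fun q hq => (hdom q hq).2) ∅
  have hran₁ : ∀ q ∈ insert (a, β) P, L.lt m q.2 (g β) := by
    refine (Finset.forall_mem_insert _ _ _).2 ⟨hβ, fun q hq => L.trans m _ _ _ ?_ hβ⟩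
    exact (hP₁ q (Finset.mem_insert_of_mem hq) _ (Finset.mem_insert_self _ _) m).1 (hdom q hq).2
  obtain ⟨c, hP₂, hxc, hc⟩ := hP₁.image_swap.exists_insert_lt_apply hL hg hgp (x := g β)
    (by simpa only [Finset.forall_mem_image, Prod.fst_swap] using hran₁) {x}
  rw [← Prod.swap_prod_mk, ← Finset.image_insert, isPartialIso_image_swap] at hP₂
  have hdom₁ : ∀ q ∈ insert (a, β) P, L.lt m lo q.1 ∧ L.lt m q.1 c := fun q hq =>
    ⟨((Finset.forall_mem_insert (a, β) P fun q => L.lt m lo q.1).2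
        ⟨hlo, fun q hq => (hdom q hq).1⟩) q hq,
      (hP₂ q (Finset.mem_insert_of_mem hq) _ (Finset.mem_insert_self _ _) m).2 (hran₁ q hq)⟩
  have hac : L.lt m a c := (hdom₁ _ (Finset.mem_insert_self _ _)).2
  refine ⟨_, g c, (Finset.subset_insert _ _).trans (Finset.subset_insert _ _), hP₂,
    ⟨β, c, Finset.mem_insert_of_mem (Finset.mem_insert_self _ _), Finset.mem_insert_self _ _, rfl⟩,
    (Finset.forall_mem_insert _ _ _).2 ⟨⟨L.trans m _ _ _ hlo hac, hc⟩, fun q hq =>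
      ⟨(hdom₁ q hq).1, L.trans m _ _ _ (hdom₁ q hq).2 hc⟩⟩,
    L.trans m _ _ _ hac hc, L.trans m _ _ _ (hxc x (Finset.mem_singleton_self x)) hc⟩

/-- `a` and `b` are the current points of the `+`- and `−`-orbital of `g h⁻¹ g h`. -/
structure OrbitState (L : NLinear n M) (m : Fin n) where
  P : Finset (M × M)
  a : M
  b : M
  isPartialIso : L.IsPartialIso P
  b_lt_a : L.lt m b a
  dom_between : ∀ q ∈ P, L.lt m b q.1 ∧ L.lt m q.1 a

structure OrbitState.Step {m : Fin n} (g : Equiv.Perm M) (x : M) (s t : OrbitState L m) :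
    Prop where
  subset : s.P ⊆ t.P
  forcesStep_a : ForcesStep g t.P s.a t.a
  forcesStep_b : ForcesStep g t.P s.b t.b
  a_lt : L.lt m s.a t.a
  lt_b : L.lt m t.b s.b
  lt_a : L.lt m x t.a
  b_lt : L.lt m t.b x
  mem_dom : ∃ y, (x, y) ∈ t.P
  mem_ran : ∃ w, (w, x) ∈ t.P

theorem OrbitState.exists_step (hL : IsUniversalNLinear n M L) {m : Fin n} {g : Equiv.Perm M}
    (hg : g ∈ L.aut) (hgp : ∀ x, ∃ y, L.lt m x y ∧ L.lt m y (g y))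
    (hgm : ∀ x, ∃ z, L.lt m z x ∧ L.lt m (g z) z) (s : OrbitState L m) (x : M) :
    ∃ t : OrbitState L m, s.Step g x t := by
  obtain ⟨P₁, a', hsub₁, hP₁, hfa, hdom₁, ha, hxa⟩ :=
    s.isPartialIso.exists_forcesStep hL hg hgp s.b_lt_a s.dom_between x
  obtain ⟨P₂, b', hsub₂, hP₂, hfb, hdom₂, hb, hxb⟩ :=
    (isPartialIso_reverse.2 hP₁).exists_forcesStep (L := L.reverse) hL.reverse
      (L.mem_aut_reverse.2 hg) hgm (L.trans m _ _ _ s.b_lt_a ha)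
      (fun q hq => (hdom₁ q hq).symm) x
  obtain ⟨P₃, hsub₃, hP₃, hdom₃, hx, hx'⟩ := (isPartialIso_reverse.1 hP₂).exists_superset_mem hL m
    (fun q hq => (hdom₂ q hq).symm) hxb hxa
  refine ⟨⟨P₃, a', b', hP₃, L.trans m _ _ _ hxb hxa, hdom₃⟩,
    ⟨hsub₁.trans (hsub₂.trans hsub₃), (hfa.mono hsub₂).mono hsub₃, hfb.mono hsub₃, ha, hb, hxa,
      hxb, hx, hx'⟩⟩

theorem OrbitState.exists_seq (hL : IsUniversalNLinear n M L) {m : Fin n} {g : Equiv.Perm M}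
    (hg : g ∈ L.aut) (hgp : ∀ x, ∃ y, L.lt m x y ∧ L.lt m y (g y))
    (hgm : ∀ x, ∃ z, L.lt m z x ∧ L.lt m (g z) z) (e : ℕ → M) :
    ∃ s : ℕ → OrbitState L m, ∀ k, (s k).Step g (e k) (s (k + 1)) := by
  obtain ⟨a, hxa, -⟩ := hgp (e 0)
  obtain ⟨b, hbx, -⟩ := hgm (e 0)
  let s₀ : OrbitState L m := ⟨∅, a, b, by simp [IsPartialIso], L.trans m _ _ _ hbx hxa, by simp⟩
  choose next hnext using OrbitState.exists_step hL hg hgp hgm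
  exact ⟨fun k => Nat.rec s₀ (fun k s => next s (e k)) k, fun k => hnext _ _⟩

end NLinear

/-- Let `g` be an automorphism of a universal `n`-linear order such
that every `x` has some `y >_m x` with `y <_m g y` and some `z <_m x` with `g z <_m z`.
Then there is an automorphism `h` such that `g ∘ h⁻¹ ∘ g ∘ h` has, with respect to
`<_m`, a `+`-orbital unbounded above and a `−`-orbital unbounded below. -/
theorem stmt10 {n : ℕ} {M : Type*} (L : NLinear n M) (hL : IsUniversalNLinear n M L)
    (m : Fin n) (g : L.aut)
    (hg : ∀ x : M, (∃ y, L.lt m x y ∧ L.lt m y ((g : Equiv.Perm M) y)) ∧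
      (∃ z, L.lt m z x ∧ L.lt m ((g : Equiv.Perm M) z) z)) :
    ∃ h : L.aut, L.PlusUnbAbove m ((g * h⁻¹ * g * h : L.aut) : Equiv.Perm M) ∧
      L.MinusUnbBelow m ((g * h⁻¹ * g * h : L.aut) : Equiv.Perm M) := by
  classical
  have : Nonempty M := @Infinite.nonempty M hL.infinite
  have : Countable M := hL.countable
  obtain ⟨e, he⟩ := exists_surjective_nat M
  obtain ⟨s, hs⟩ := NLinear.OrbitState.exists_seq hL g.2 (fun x => (hg x).1) (fun x => (hg x).2) e
  obtain ⟨h, hh, hext⟩ := L.exists_mem_aut_of_chain m (fun k => (s k).P)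
    (monotone_nat_of_le_succ fun k => (hs k).subset) (fun k => (s k).isPartialIso)
    (fun x => by obtain ⟨k, rfl⟩ := he x; exact ⟨k + 1, (hs k).mem_dom⟩)
    (fun x => by obtain ⟨k, rfl⟩ := he x; exact ⟨k + 1, (hs k).mem_ran⟩)
  refine ⟨⟨h, hh⟩, ?_, ?_⟩
  · refine L.plusUnbAbove_of_orbit (a := fun k => (s k).a)
      (fun k => (hs k).forcesStep_a.apply_eq (hext _)) (hs 0).a_lt fun x => ?_
    obtain ⟨k, rfl⟩ := he x
    exact ⟨k + 1, (hs k).lt_a⟩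
  -- a `−`-orbital unbounded below for `L` is a `+`-orbital unbounded above for `L.reverse`
  · refine L.reverse.plusUnbAbove_of_orbit (a := fun k => (s k).b)
      (fun k => (hs k).forcesStep_b.apply_eq (hext _)) (hs 0).lt_b fun x => ?_
    obtain ⟨k, rfl⟩ := he x
    exact ⟨k + 1, (hs k).b_lt⟩
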